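/- arXiv:1705.04123 — 7 statements merged into one kernel-verified Lean document; each statement's English description precedes it below -/
import Mathlib

section
/- The discrete fractional Sturm–Liouville operator L₁ within nabla Riemann–Liouville fractional differences is self-adjoint: for any real-valued functions u, v defined on the integers, ∑_{s=a+1}^{b-1} u(s)·(L₁v)(s) = ∑_{s=a+1}^{b-1} v(s)·(L₁u)(s); equivalently ⟨L₁u, v⟩ = ⟨u, L₁v⟩ in the inner product ⟨x,y⟩ = ∑_{s=a+1}^{b-1} x(s)y(s). -/
/-- Rising factorial `t^{overline α} = Γ(t+α)/Γ(t)`. -/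
noncomputable def risingFac (t α : ℝ) : ℝ := Real.Gamma (t + α) / Real.Gamma t

/-- Nabla left Riemann–Liouville fractional difference of order `μ`:
`∇_a^μ x(t) = ∇[ (1/Γ(1−μ)) ∑_{s=a+1}^{t} (t−ρ(s))^{overline{−μ}} x(s) ]`. -/
noncomputable def nablaLeftRL (μ : ℝ) (a : ℤ) (x : ℤ → ℝ) (t : ℤ) : ℝ :=
  (1 / Real.Gamma (1 - μ)) *
      ∑ s ∈ Finset.Icc (a + 1) t, risingFac ((t - (s - 1) : ℤ) : ℝ) (-μ) * x s -
    (1 / Real.Gamma (1 - μ)) *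
      ∑ s ∈ Finset.Icc (a + 1) (t - 1), risingFac (((t - 1) - (s - 1) : ℤ) : ℝ) (-μ) * x s

/-- Nabla right Riemann–Liouville fractional difference of order `μ`:
`_b∇^μ x(t) = −Δ[ (1/Γ(1−μ)) ∑_{s=t}^{b−1} (s−ρ(t))^{overline{−μ}} x(s) ]`. -/
noncomputable def nablaRightRL (μ : ℝ) (b : ℤ) (x : ℤ → ℝ) (t : ℤ) : ℝ :=
  -((1 / Real.Gamma (1 - μ)) *
        ∑ s ∈ Finset.Icc (t + 1) (b - 1), risingFac ((s - ((t + 1) - 1) : ℤ) : ℝ) (-μ) * x s -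
      (1 / Real.Gamma (1 - μ)) *
        ∑ s ∈ Finset.Icc t (b - 1), risingFac ((s - (t - 1) : ℤ) : ℝ) (-μ) * x s)

/-- The discrete fractional Sturm–Liouville operator
`L₁x(t) = ∇_a^μ( p(t) · (_b∇^μ x)(t) ) + q(t)x(t)`. -/
noncomputable def L1 (μ : ℝ) (a b : ℤ) (p q : ℤ → ℝ) (x : ℤ → ℝ) (t : ℤ) : ℝ :=
  nablaLeftRL μ a (fun τ => p τ * nablaRightRL μ b x τ) t + q t * x t

/-!
Both fractional differences are convolutions with one and the same kernel `nablaRLKernel μ`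
(the difference of `k ↦ k^{overline{-μ}} / Γ(1-μ)`): `∇_a^μ` sums it over `s ≤ t`, and `_b∇^μ`
over `s ≥ t`. Exchanging the order of summation over the triangle `a < s ≤ t < b` shows that
they are transposes of each other for `⟨x, y⟩ = ∑_{s=a+1}^{b-1} x(s) y(s)`. Hence
`⟨u, ∇_a^μ (p · _b∇^μ v)⟩ = ⟨_b∇^μ u, p · _b∇^μ v⟩`, which is symmetric in `u` and `v`, as is the
`q`-term.
-/

open Finset

theorem sum_Icc_mul_sum_Icc_le_comm {α R : Type*} [Preorder α] [LocallyFiniteOrder α]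
    [CommSemiring R] (m n : α) (K : α → α → R) (u y : α → R) :
    ∑ t ∈ Icc m n, u t * ∑ s ∈ Icc m t, K t s * y s =
      ∑ s ∈ Icc m n, y s * ∑ t ∈ Icc s n, K t s * u t := by
  simp only [mul_sum]
  rw [sum_comm' (s' := fun s => Icc s n) (t' := Icc m n) fun t s => by
    simp only [mem_Icc]
    constructor
    · rintro ⟨⟨-, htn⟩, hms, hst⟩
      exact ⟨⟨hst, htn⟩, hms, hst.trans htn⟩
    · rintro ⟨⟨hst, htn⟩, hms, -⟩
      exact ⟨⟨hms.trans hst, htn⟩, hms, hst⟩]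
  exact sum_congr rfl fun s _ => sum_congr rfl fun t _ => by ring

/-- `Γ` has a pole at `0`: the junk values `Γ 0 = 0` and `x / 0 = 0` give `0^{overline α} = 0`,
in agreement with `1 / Γ(0) = 0`. -/
theorem risingFac_zero_left (α : ℝ) : risingFac 0 α = 0 := by
  simp [risingFac, Real.Gamma_zero]

noncomputable def nablaRLKernel (μ : ℝ) (k : ℤ) : ℝ :=
  (risingFac ((k : ℝ) + 1) (-μ) - risingFac (k : ℝ) (-μ)) / Real.Gamma (1 - μ)

theorem nablaLeftRL_eq_sum (μ : ℝ) (a : ℤ) (x : ℤ → ℝ) (t : ℤ) :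
    nablaLeftRL μ a x t = ∑ s ∈ Icc (a + 1) t, nablaRLKernel μ (t - s) * x s := by
  have hextend : ∑ s ∈ Icc (a + 1) (t - 1), risingFac (((t - 1) - (s - 1) : ℤ) : ℝ) (-μ) * x s =
      ∑ s ∈ Icc (a + 1) t, risingFac ((t - s : ℤ) : ℝ) (-μ) * x s := by
    refine sum_subset_zero_on_sdiff (Icc_subset_Icc_right (by omega)) (fun s hs => ?_)
      (fun s _ => by rw [sub_sub_sub_cancel_right])
    obtain rfl : s = t := by simp only [mem_sdiff, mem_Icc] at hs; omega
    simp [risingFac_zero_left]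
  rw [nablaLeftRL, hextend, mul_sum, mul_sum, ← sum_sub_distrib]
  refine sum_congr rfl fun s _ => ?_
  rw [nablaRLKernel, show ((t - (s - 1) : ℤ) : ℝ) = ((t - s : ℤ) : ℝ) + 1 by push_cast; ring]
  ring

theorem nablaRightRL_eq_sum (μ : ℝ) (b : ℤ) (x : ℤ → ℝ) (t : ℤ) :
    nablaRightRL μ b x t = ∑ s ∈ Icc t (b - 1), nablaRLKernel μ (s - t) * x s := by
  have hextend : ∑ s ∈ Icc (t + 1) (b - 1), risingFac ((s - ((t + 1) - 1) : ℤ) : ℝ) (-μ) * x s =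
      ∑ s ∈ Icc t (b - 1), risingFac ((s - t : ℤ) : ℝ) (-μ) * x s := by
    refine sum_subset_zero_on_sdiff (Icc_subset_Icc_left (by omega)) (fun s hs => ?_)
      (fun s _ => by rw [add_sub_cancel_right])
    obtain rfl : s = t := by simp only [mem_sdiff, mem_Icc] at hs; omega
    simp [risingFac_zero_left]
  rw [nablaRightRL, hextend, neg_sub, mul_sum, mul_sum, ← sum_sub_distrib]
  refine sum_congr rfl fun s _ => ?_
  rw [nablaRLKernel, show ((s - (t - 1) : ℤ) : ℝ) = ((s - t : ℤ) : ℝ) + 1 by push_cast; ring]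
  ring

theorem sum_mul_nablaLeftRL_eq_sum_mul_nablaRightRL (μ : ℝ) (a b : ℤ) (u y : ℤ → ℝ) :
    ∑ t ∈ Icc (a + 1) (b - 1), u t * nablaLeftRL μ a y t =
      ∑ t ∈ Icc (a + 1) (b - 1), y t * nablaRightRL μ b u t := by
  simp only [nablaLeftRL_eq_sum, nablaRightRL_eq_sum]
  exact sum_Icc_mul_sum_Icc_le_comm _ _ (fun t s => nablaRLKernel μ (t - s)) u y

theorem L1_selfAdjoint_general (μ : ℝ) (a b : ℤ)
    (p q : ℤ → ℝ) (u v : ℤ → ℝ) :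
    ∑ s ∈ Finset.Icc (a + 1) (b - 1), u s * L1 μ a b p q v s =
      ∑ s ∈ Finset.Icc (a + 1) (b - 1), v s * L1 μ a b p q u s := by
  simp only [L1, mul_add, sum_add_distrib, sum_mul_nablaLeftRL_eq_sum_mul_nablaRightRL]
  congr 1 <;> exact sum_congr rfl fun s _ => by ring

/-- The DFSL operator `L₁` is self-adjoint:
`⟨L₁u, v⟩ = ⟨u, L₁v⟩` for the inner product `⟨x,y⟩ = ∑_{s=a+1}^{b−1} x(s)y(s)`. -/
theorem L1_selfAdjoint (μ : ℝ) (hμ0 : 0 < μ) (hμ1 : μ < 1) (a b : ℤ) (hab : a < b)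
    (p q r : ℤ → ℝ) (hp : ∀ t, 0 < p t) (hr : ∀ t, 0 < r t) (u v : ℤ → ℝ) :
    ∑ s ∈ Finset.Icc (a + 1) (b - 1), u s * L1 μ a b p q v s =
      ∑ s ∈ Finset.Icc (a + 1) (b - 1), v s * L1 μ a b p q u s :=
  L1_selfAdjoint_general μ a b p q u v
end

section
/- All eigenvalues of the nabla Riemann–Liouville discrete fractional Sturm–Liouville equation are real: if u is a complex-valued function, not identically zero on {a+1,…,b−1}, and λ ∈ ℂ satisfies L₁u(t) = λ r(t)u(t) for all t with a+1 ≤ t ≤ b−1, then λ is real (its imaginary part vanishes). -/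
/-- Nabla left Riemann–Liouville fractional difference of order `μ` (complex-valued). -/
noncomputable def nablaLeftRLC (μ : ℝ) (a : ℤ) (x : ℤ → ℂ) (t : ℤ) : ℂ :=
  (1 / (Real.Gamma (1 - μ) : ℂ)) *
      ∑ s ∈ Finset.Icc (a + 1) t, (risingFac ((t - (s - 1) : ℤ) : ℝ) (-μ) : ℂ) * x s -
    (1 / (Real.Gamma (1 - μ) : ℂ)) *
      ∑ s ∈ Finset.Icc (a + 1) (t - 1), (risingFac (((t - 1) - (s - 1) : ℤ) : ℝ) (-μ) : ℂ) * x s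

/-- Nabla right Riemann–Liouville fractional difference of order `μ` (complex-valued). -/
noncomputable def nablaRightRLC (μ : ℝ) (b : ℤ) (x : ℤ → ℂ) (t : ℤ) : ℂ :=
  -((1 / (Real.Gamma (1 - μ) : ℂ)) *
        ∑ s ∈ Finset.Icc (t + 1) (b - 1), (risingFac ((s - ((t + 1) - 1) : ℤ) : ℝ) (-μ) : ℂ) * x s -
      (1 / (Real.Gamma (1 - μ) : ℂ)) *
        ∑ s ∈ Finset.Icc t (b - 1), (risingFac ((s - (t - 1) : ℤ) : ℝ) (-μ) : ℂ) * x s)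

/-- The discrete fractional Sturm–Liouville operator `L₁` with real coefficients
`p, q`, acting on complex-valued functions. -/
noncomputable def L1C (μ : ℝ) (a b : ℤ) (p q : ℤ → ℝ) (x : ℤ → ℂ) (t : ℤ) : ℂ :=
  nablaLeftRLC μ a (fun τ => (p τ : ℂ) * nablaRightRLC μ b x τ) t + (q t : ℂ) * x t

/-!
On the window `a + 1 ≤ t ≤ b - 1` both fractional differences are given by one real Toeplitz
kernel `K (t - s)`, applied as `K` and as its transpose respectively, because `Γ` vanishes at
the non-positive integers and truncates the sums. Hence `L₁ = K P Kᵀ + Q` there, a real symmetric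
matrix, so `∑ conj (u t) * L₁ u t = ∑ p ‖(Kᵀ u) τ‖² + ∑ q ‖u t‖²` is real. The eigenvalue equation
turns the same sum into `λ ∑ r ‖u t‖²` with a positive real factor, so `λ` is real.
-/

open Finset ComplexConjugate

theorem risingFac_intCast_of_nonpos {n : ℤ} (hn : n ≤ 0) (α : ℝ) : risingFac n α = 0 := by
  obtain ⟨m, rfl⟩ := Int.exists_eq_neg_ofNat hn
  simp [risingFac, Real.Gamma_neg_nat_eq_zero]

theorem sum_Icc_risingFac_sub_mul_extend_right (α : ℝ) (x : ℤ → ℂ) {lo hi hi' k : ℤ}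
    (hk : k ≤ hi + 1) (hhi : hi ≤ hi') :
    ∑ s ∈ Icc lo hi, (risingFac ((k - s : ℤ) : ℝ) α : ℂ) * x s =
      ∑ s ∈ Icc lo hi', (risingFac ((k - s : ℤ) : ℝ) α : ℂ) * x s :=
  sum_subset (Icc_subset_Icc_right hhi) fun s hs hns => by
    simp only [mem_Icc] at hs hns
    rw [risingFac_intCast_of_nonpos (by omega), Complex.ofReal_zero, zero_mul]

theorem sum_Icc_risingFac_sub_mul_extend_left (α : ℝ) (x : ℤ → ℂ) {lo lo' hi k : ℤ}
    (hk : lo ≤ k + 1) (hlo : lo' ≤ lo) :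
    ∑ s ∈ Icc lo hi, (risingFac ((s - k : ℤ) : ℝ) α : ℂ) * x s =
      ∑ s ∈ Icc lo' hi, (risingFac ((s - k : ℤ) : ℝ) α : ℂ) * x s :=
  sum_subset (Icc_subset_Icc_left hlo) fun s hs hns => by
    simp only [mem_Icc] at hs hns
    rw [risingFac_intCast_of_nonpos (by omega), Complex.ofReal_zero, zero_mul]

noncomputable def nablaKernel (μ : ℝ) (n : ℤ) : ℝ :=
  (risingFac (n + 1) (-μ) - risingFac n (-μ)) / Real.Gamma (1 - μ)

theorem nablaLeftRLC_eq_sum_nablaKernel (μ : ℝ) (a b : ℤ) (x : ℤ → ℂ) {t : ℤ}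
    (ht : t ≤ b - 1) :
    nablaLeftRLC μ a x t = ∑ s ∈ Icc (a + 1) (b - 1), (nablaKernel μ (t - s) : ℂ) * x s := by
  have hshift₁ : ∀ s : ℤ, t - (s - 1) = t + 1 - s := fun s => by ring
  have hshift₂ : ∀ s : ℤ, t - 1 - (s - 1) = t - s := fun s => by ring
  simp only [nablaLeftRLC, hshift₁, hshift₂]
  rw [sum_Icc_risingFac_sub_mul_extend_right _ _ le_rfl ht,
    sum_Icc_risingFac_sub_mul_extend_right _ _ (by omega) (by omega : t - 1 ≤ b - 1),
    mul_sum, mul_sum, ← sum_sub_distrib]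
  refine sum_congr rfl fun s _ => ?_
  simp only [nablaKernel]
  push_cast
  rw [add_sub_right_comm]
  ring

theorem nablaRightRLC_eq_sum_nablaKernel (μ : ℝ) (a b : ℤ) (x : ℤ → ℂ) {t : ℤ}
    (ht : a + 1 ≤ t) :
    nablaRightRLC μ b x t = ∑ s ∈ Icc (a + 1) (b - 1), (nablaKernel μ (s - t) : ℂ) * x s := by
  have hshift₁ : ∀ s : ℤ, s - (t + 1 - 1) = s - t := fun s => by ring
  simp only [nablaRightRLC, hshift₁]
  rw [sum_Icc_risingFac_sub_mul_extend_left _ _ (by omega) (by omega : a + 1 ≤ t + 1),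
    sum_Icc_risingFac_sub_mul_extend_left _ _ (by omega) ht,
    mul_sum, mul_sum, neg_sub, ← sum_sub_distrib]
  refine sum_congr rfl fun s _ => ?_
  simp only [nablaKernel]
  push_cast
  rw [sub_sub_eq_add_sub, add_sub_right_comm]
  ring

theorem L1C_eq_sum_nablaKernel (μ : ℝ) (a b : ℤ) (p q : ℤ → ℝ) (x : ℤ → ℂ) {t : ℤ}
    (ht : t ∈ Icc (a + 1) (b - 1)) :
    L1C μ a b p q x t =
      ∑ τ ∈ Icc (a + 1) (b - 1), (nablaKernel μ (t - τ) : ℂ) *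
          ((p τ : ℂ) * ∑ s ∈ Icc (a + 1) (b - 1), (nablaKernel μ (s - τ) : ℂ) * x s) +
        (q t : ℂ) * x t := by
  rw [L1C, nablaLeftRLC_eq_sum_nablaKernel μ a b _ (mem_Icc.mp ht).2]
  congr 1
  refine sum_congr rfl fun τ hτ => ?_
  rw [nablaRightRLC_eq_sum_nablaKernel μ a b x (mem_Icc.mp hτ).1]

section QuadraticForm

variable {ι : Type*} (I : Finset ι)

theorem im_sum_conj_mul_kernel_sandwich (K : ι → ι → ℝ) (p q : ι → ℝ) (u : ι → ℂ) :
    (∑ t ∈ I, conj (u t) *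
        (∑ τ ∈ I, (K t τ : ℂ) * ((p τ : ℂ) * ∑ s ∈ I, (K s τ : ℂ) * u s) + (q t : ℂ) * u t)).im
      = 0 := by
  have hreal : ∀ (c : ℝ) (z : ℂ), ((c : ℂ) * (conj z * z)).im = 0 := fun c z => by
    rw [mul_comm (conj z), Complex.mul_conj, ← Complex.ofReal_mul, Complex.ofReal_im]
  have hsandwich : ∑ t ∈ I, conj (u t) *
        ∑ τ ∈ I, (K t τ : ℂ) * ((p τ : ℂ) * ∑ s ∈ I, (K s τ : ℂ) * u s) =
      ∑ τ ∈ I, (p τ : ℂ) *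
        (conj (∑ t ∈ I, (K t τ : ℂ) * u t) * ∑ s ∈ I, (K s τ : ℂ) * u s) := by
    simp only [map_sum, map_mul, Complex.conj_ofReal, mul_sum, sum_mul]
    rw [sum_comm]
    refine sum_congr rfl fun τ _ => ?_
    rw [sum_comm]
    exact sum_congr rfl fun s _ => sum_congr rfl fun t _ => by ring
  rw [sum_congr rfl fun t _ => mul_add _ _ _, sum_add_distrib, Complex.add_im, hsandwich,
    Complex.im_sum, Complex.im_sum, sum_eq_zero fun τ _ => hreal _ _, zero_add]
  exact sum_eq_zero fun t _ => by rw [mul_left_comm, hreal]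

theorem im_eq_zero_of_im_weighted_eigen_sum_eq_zero {r : ι → ℝ} (hr : ∀ t ∈ I, 0 < r t)
    {u : ι → ℂ} (hu : ∃ t ∈ I, u t ≠ 0) {lam : ℂ}
    (h : (∑ t ∈ I, conj (u t) * (lam * ((r t : ℂ) * u t))).im = 0) : lam.im = 0 := by
  have hsum : ∑ t ∈ I, conj (u t) * (lam * ((r t : ℂ) * u t)) =
      lam * ((∑ t ∈ I, r t * Complex.normSq (u t) : ℝ) : ℂ) := by
    push_cast
    rw [mul_sum]
    refine sum_congr rfl fun t _ => ?_
    rw [Complex.normSq_eq_conj_mul_self]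
    ring
  have hpos : 0 < ∑ t ∈ I, r t * Complex.normSq (u t) := by
    obtain ⟨t₀, ht₀, hut₀⟩ := hu
    exact sum_pos' (fun t ht => mul_nonneg (hr t ht).le (Complex.normSq_nonneg _))
      ⟨t₀, ht₀, mul_pos (hr t₀ ht₀) (Complex.normSq_pos.mpr hut₀)⟩
  rw [hsum, Complex.im_mul_ofReal] at h
  exact (mul_eq_zero.mp h).resolve_right hpos.ne'

end QuadraticForm

theorem L1_eigenvalues_real_general (μ : ℝ)
    (a b : ℤ) (p q r : ℤ → ℝ) (hr : ∀ t, 0 < r t)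
    (u : ℤ → ℂ) (hu0 : ∃ t ∈ Finset.Icc (a + 1) (b - 1), u t ≠ 0) (lam : ℂ)
    (hu : ∀ t ∈ Finset.Icc (a + 1) (b - 1), L1C μ a b p q u t = lam * ((r t : ℂ) * u t)) :
    lam.im = 0 := by
  refine im_eq_zero_of_im_weighted_eigen_sum_eq_zero _ (fun t _ => hr t) hu0 ?_
  rw [← sum_congr rfl fun t ht => congrArg (conj (u t) * ·) (hu t ht),
    sum_congr rfl fun t ht => by rw [L1C_eq_sum_nablaKernel μ a b p q u ht]]
  exact im_sum_conj_mul_kernel_sandwich _ (fun t τ => nablaKernel μ (t - τ)) p q u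

/-- All eigenvalues of the nabla R-L DFSL equation are real. -/
theorem L1_eigenvalues_real (μ : ℝ) (hμ0 : 0 < μ) (hμ1 : μ < 1)
    (a b : ℤ) (hab : a < b) (p q r : ℤ → ℝ) (hp : ∀ t, 0 < p t) (hr : ∀ t, 0 < r t)
    (u : ℤ → ℂ) (hu0 : ∃ t ∈ Finset.Icc (a + 1) (b - 1), u t ≠ 0) (lam : ℂ)
    (hu : ∀ t ∈ Finset.Icc (a + 1) (b - 1), L1C μ a b p q u t = lam * ((r t : ℂ) * u t)) :
    lam.im = 0 :=
  L1_eigenvalues_real_general μ a b p q r hr u hu0 lam hu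
end

section
/- The discrete fractional Sturm–Liouville operator L₂ within Grünwald–Letnikov delta fractional differences is self-adjoint: for any real-valued functions u, v defined on {0,1,…,N}, ∑_{s=0}^{N} u(s)·(L₂v)(s) = ∑_{s=0}^{N} v(s)·(L₂u)(s); equivalently ⟨L₂u, v⟩ = ⟨u, L₂v⟩ in the inner product ⟨x,y⟩ = ∑_{s=0}^{N} x(s)y(s). -/
/-! The Grünwald–Letnikov differences `Δ₋^μ` and `Δ₊^μ` are transposes of each other for
`⟨x, y⟩ = ∑_{t ≤ N} x t · y t`, both being given by the Toeplitz matrix of the coefficients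
`glCoef μ`. Hence `⟨u, Δ₋^μ (p · Δ₊^μ v)⟩ = ∑ p · Δ₊^μ u · Δ₊^μ v`, which is symmetric in `u` and `v`,
as is the potential term `⟨u, q v⟩`. -/

/-- The Grünwald–Letnikov coefficient `(−1)^s · μ(μ−1)⋯(μ−s+1)/s!`. -/
noncomputable def glCoef (μ : ℝ) (s : ℕ) : ℝ :=
  (-1 : ℝ) ^ s * (∏ i ∈ Finset.range s, (μ - i)) / (Nat.factorial s)

/-- G-L delta left fractional difference:
`Δ₋^μ x(t) = ∑_{s=0}^{t} (−1)^s (μ(μ−1)⋯(μ−s+1)/s!) x(t−s)`. -/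
noncomputable def deltaMinusGL (μ : ℝ) (x : ℕ → ℝ) (t : ℕ) : ℝ :=
  ∑ s ∈ Finset.range (t + 1), glCoef μ s * x (t - s)

/-- G-L delta right fractional difference:
`Δ₊^μ x(t) = ∑_{s=0}^{N−t} (−1)^s (μ(μ−1)⋯(μ−s+1)/s!) x(t+s)`. -/
noncomputable def deltaPlusGL (μ : ℝ) (N : ℕ) (x : ℕ → ℝ) (t : ℕ) : ℝ :=
  ∑ s ∈ Finset.range (N - t + 1), glCoef μ s * x (t + s)

/-- The discrete fractional Sturm–Liouville operator
`L₂x(t) = Δ₋^μ( p·Δ₊^μ x )(t) + q(t)x(t)`. -/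
noncomputable def L2 (μ : ℝ) (N : ℕ) (p q : ℕ → ℝ) (x : ℕ → ℝ) (t : ℕ) : ℝ :=
  deltaMinusGL μ (fun τ => p τ * deltaPlusGL μ N x τ) t + q t * x t

open Finset

theorem sum_mul_sum_range_sub_eq {R : Type*} [CommSemiring R] (N : ℕ) (c u w : ℕ → R) :
    ∑ t ∈ range (N + 1), u t * ∑ s ∈ range (t + 1), c s * w (t - s) =
      ∑ τ ∈ range (N + 1), w τ * ∑ s ∈ range (N - τ + 1), c s * u (τ + s) := by
  -- both sides are the sum of `c (t - τ) * w τ * u t` over `τ ≤ t ≤ N`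
  calc ∑ t ∈ range (N + 1), u t * ∑ s ∈ range (t + 1), c s * w (t - s)
      = ∑ t ∈ range (N + 1), ∑ τ ∈ range (t + 1), c (t - τ) * w τ * u (τ + (t - τ)) := by
        refine sum_congr rfl fun t _ => ?_
        rw [mul_sum, ← sum_range_reflect]
        refine sum_congr rfl fun τ hτ => ?_
        have hτt : τ ≤ t := Nat.lt_succ_iff.mp (mem_range.mp hτ)
        rw [Nat.add_sub_cancel, Nat.sub_sub_self hτt, Nat.add_sub_cancel' hτt]
        ring
    _ = ∑ τ ∈ range (N + 1), ∑ s ∈ range (N + 1 - τ), c s * w τ * u (τ + s) :=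
        sum_range_diag_flip (N + 1) fun τ s => c s * w τ * u (τ + s)
    _ = _ := by
        refine sum_congr rfl fun τ hτ => ?_
        rw [Nat.sub_add_comm (Nat.lt_succ_iff.mp (mem_range.mp hτ)), mul_sum]
        exact sum_congr rfl fun s _ => by ring

theorem sum_mul_deltaMinusGL (μ : ℝ) (N : ℕ) (u w : ℕ → ℝ) :
    ∑ t ∈ range (N + 1), u t * deltaMinusGL μ w t =
      ∑ t ∈ range (N + 1), w t * deltaPlusGL μ N u t :=
  sum_mul_sum_range_sub_eq N (glCoef μ) u w

theorem L2_selfAdjoint_general (μ : ℝ) (N : ℕ) (p q : ℕ → ℝ) (u v : ℕ → ℝ) :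
    ∑ s ∈ Finset.range (N + 1), u s * L2 μ N p q v s =
      ∑ s ∈ Finset.range (N + 1), v s * L2 μ N p q u s := by
  simp only [L2, mul_add, sum_add_distrib, sum_mul_deltaMinusGL]
  congr 1 <;> exact sum_congr rfl fun s _ => by ring

/-- The DFSL operator `L₂` is self-adjoint:
`∑_{s=0}^{N} u(s)·(L₂v)(s) = ∑_{s=0}^{N} v(s)·(L₂u)(s)`. -/
theorem L2_selfAdjoint (μ : ℝ) (hμ0 : 0 < μ) (hμ1 : μ ≤ 1) (N : ℕ) (hN : 0 < N)
    (p q r : ℕ → ℝ) (hp : ∀ t, 0 < p t) (hr : ∀ t, 0 < r t) (u v : ℕ → ℝ) :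
    ∑ s ∈ Finset.range (N + 1), u s * L2 μ N p q v s =
      ∑ s ∈ Finset.range (N + 1), v s * L2 μ N p q u s :=
  L2_selfAdjoint_general μ N p q u v
end

section
/- Eigenfunctions of the Grünwald–Letnikov discrete fractional Sturm–Liouville equation corresponding to distinct eigenvalues are orthogonal with respect to the weight r: if L₂u(t) = λ_α r(t)u(t) and L₂v(t) = λ_β r(t)v(t) hold for all t in {0,1,…,N}, and λ_α ≠ λ_β, then ∑_{s=0}^{N} r(s)u(s)v(s) = 0. -/
/-! The left and right Grünwald–Letnikov differences are adjoint on `{0, …, N}`, so `L₂` is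
symmetric for the plain inner product `∑ x y`. Pairing the two eigen-equations with the other
eigenfunction and subtracting gives `(λ_α - λ_β) ∑ r u v = 0`. -/

open Finset

/-- Both sides are the sum of `g t * glCoef μ s * f τ` over `τ + s = t ≤ N`. -/
theorem sum_mul_deltaMinusGL_eq_sum_mul_deltaPlusGL (μ : ℝ) (N : ℕ) (f g : ℕ → ℝ) :
    ∑ t ∈ range (N + 1), g t * deltaMinusGL μ f t
      = ∑ τ ∈ range (N + 1), f τ * deltaPlusGL μ N g τ := by
  simp only [deltaMinusGL, deltaPlusGL, mul_sum, sum_sigma']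
  refine sum_nbij' (fun x => ⟨x.1 - x.2, x.2⟩) (fun x => ⟨x.1 + x.2, x.2⟩) ?_ ?_ ?_ ?_ ?_ <;>
    rintro ⟨t, s⟩ h
  all_goals simp only [mem_sigma, mem_range, Sigma.mk.injEq, heq_eq_eq, and_true] at h ⊢
  iterate 4 omega
  · rw [Nat.sub_add_cancel (by omega)]
    ring

theorem sum_mul_L2_comm (μ : ℝ) (N : ℕ) (p q u v : ℕ → ℝ) :
    ∑ t ∈ range (N + 1), v t * L2 μ N p q u t
      = ∑ t ∈ range (N + 1), u t * L2 μ N p q v t := by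
  simp only [L2, mul_add, sum_add_distrib, sum_mul_deltaMinusGL_eq_sum_mul_deltaPlusGL]
  congr 1 <;> exact sum_congr rfl fun t _ => by ring

theorem sum_mul_L2_of_eigen {μ l : ℝ} {N : ℕ} {p q r u : ℕ → ℝ}
    (hu : ∀ t ∈ range (N + 1), L2 μ N p q u t = l * (r t * u t)) (v : ℕ → ℝ) :
    ∑ t ∈ range (N + 1), v t * L2 μ N p q u t = l * ∑ t ∈ range (N + 1), r t * u t * v t := by
  rw [mul_sum]
  exact sum_congr rfl fun t ht => by rw [hu t ht]; ring

theorem L2_eigenfunctions_orthogonal_general (μ : ℝ)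
    (N : ℕ) (p q r : ℕ → ℝ)
    (u v : ℕ → ℝ) (lα lβ : ℝ) (hαβ : lα ≠ lβ)
    (hu : ∀ t ∈ Finset.range (N + 1), L2 μ N p q u t = lα * (r t * u t))
    (hv : ∀ t ∈ Finset.range (N + 1), L2 μ N p q v t = lβ * (r t * v t)) :
    ∑ s ∈ Finset.range (N + 1), r s * u s * v s = 0 := by
  have hsymm := sum_mul_L2_comm μ N p q u v
  rw [sum_mul_L2_of_eigen hu, sum_mul_L2_of_eigen hv] at hsymm
  simp only [mul_right_comm (r _) (v _)] at hsymm
  exact (mul_eq_mul_right_iff.mp hsymm).resolve_left hαβ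

/-- Eigenfunctions of the G-L DFSL equation corresponding to distinct eigenvalues
are orthogonal with respect to the weight `r`. -/
theorem L2_eigenfunctions_orthogonal (μ : ℝ) (hμ0 : 0 < μ) (hμ1 : μ ≤ 1)
    (N : ℕ) (hN : 0 < N) (p q r : ℕ → ℝ) (hp : ∀ t, 0 < p t) (hr : ∀ t, 0 < r t)
    (u v : ℕ → ℝ) (lα lβ : ℝ) (hαβ : lα ≠ lβ)
    (hu : ∀ t ∈ Finset.range (N + 1), L2 μ N p q u t = lα * (r t * u t))
    (hv : ∀ t ∈ Finset.range (N + 1), L2 μ N p q v t = lβ * (r t * v t)) :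
    ∑ s ∈ Finset.range (N + 1), r s * u s * v s = 0 :=
  L2_eigenfunctions_orthogonal_general μ N p q r u v lα lβ hαβ hu hv
end

section
/- All eigenvalues of the Grünwald–Letnikov discrete fractional Sturm–Liouville equation are real: if u is a complex-valued function on {0,1,…,N}, not identically zero, and λ ∈ ℂ satisfies L₂u(t) = λ r(t)u(t) for all t in {0,1,…,N}, then λ is real (its imaginary part vanishes). -/
/-!
Pairing the eigen-equation with `conj u` and summing over `{0, …, N}` gives
`∑ L₂u · conj u = λ ∑ r |u|²`. Summation by parts moves the left difference onto
`conj u`, where it becomes the right difference of `conj u`, that is `conj (Δ₊ u)`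
since the Grünwald–Letnikov coefficients are real; hence the left side equals
`∑ p |Δ₊ u|² + q |u|²`, a real number. As `∑ r |u|² > 0`, `λ` is real.
-/

open Finset ComplexConjugate

noncomputable def deltaMinusGLC (μ : ℝ) (x : ℕ → ℂ) (t : ℕ) : ℂ :=
  ∑ s ∈ Finset.range (t + 1), (glCoef μ s : ℂ) * x (t - s)

noncomputable def deltaPlusGLC (μ : ℝ) (N : ℕ) (x : ℕ → ℂ) (t : ℕ) : ℂ :=
  ∑ s ∈ Finset.range (N - t + 1), (glCoef μ s : ℂ) * x (t + s)

noncomputable def L2C (μ : ℝ) (N : ℕ) (p q : ℕ → ℝ) (x : ℕ → ℂ) (t : ℕ) : ℂ :=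
  deltaMinusGLC μ (fun τ => (p τ : ℂ) * deltaPlusGLC μ N x τ) t + (q t : ℂ) * x t

theorem sum_deltaMinusGLC_mul (μ : ℝ) (N : ℕ) (f g : ℕ → ℂ) :
    ∑ t ∈ range (N + 1), deltaMinusGLC μ f t * g t
      = ∑ t ∈ range (N + 1), f t * deltaPlusGLC μ N g t := by
  calc ∑ t ∈ range (N + 1), deltaMinusGLC μ f t * g t
      = ∑ t ∈ range (N + 1), ∑ k ∈ range (t + 1),
          (glCoef μ (t - k) : ℂ) * f k * g (k + (t - k)) := by
        refine sum_congr rfl fun t _ => ?_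
        rw [deltaMinusGLC, sum_mul, ← sum_range_reflect]
        refine sum_congr rfl fun k hk => ?_
        rw [mem_range] at hk
        rw [show t + 1 - 1 - k = t - k by omega, Nat.sub_sub_self (by omega),
          Nat.add_sub_cancel' (by omega)]
    _ = ∑ t ∈ range (N + 1), ∑ s ∈ range (N + 1 - t), (glCoef μ s : ℂ) * f t * g (t + s) :=
        sum_range_diag_flip (N + 1) fun k s => (glCoef μ s : ℂ) * f k * g (k + s)
    _ = ∑ t ∈ range (N + 1), f t * deltaPlusGLC μ N g t := by
        refine sum_congr rfl fun t ht => ?_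
        rw [mem_range] at ht
        rw [deltaPlusGLC, mul_sum, show N + 1 - t = N - t + 1 by omega]
        exact sum_congr rfl fun s _ => by ring

theorem deltaPlusGLC_conj (μ : ℝ) (N : ℕ) (x : ℕ → ℂ) (t : ℕ) :
    deltaPlusGLC μ N (fun τ => conj (x τ)) t = conj (deltaPlusGLC μ N x t) := by
  simp only [deltaPlusGLC, map_sum, map_mul, Complex.conj_ofReal]

theorem sum_L2C_mul_conj (μ : ℝ) (N : ℕ) (p q : ℕ → ℝ) (x : ℕ → ℂ) :
    ∑ t ∈ range (N + 1), L2C μ N p q x t * conj (x t)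
      = ((∑ t ∈ range (N + 1),
          (p t * Complex.normSq (deltaPlusGLC μ N x t) + q t * Complex.normSq (x t)) : ℝ) : ℂ) := by
  simp only [L2C, add_mul, sum_add_distrib, sum_deltaMinusGLC_mul, deltaPlusGLC_conj]
  push_cast
  simp only [← Complex.mul_conj, mul_assoc]

theorem L2_eigenvalues_real_general (μ : ℝ)
    (N : ℕ) (p q r : ℕ → ℝ) (hr : ∀ t, 0 < r t)
    (u : ℕ → ℂ) (hu0 : ∃ t ∈ Finset.range (N + 1), u t ≠ 0) (lam : ℂ)
    (hu : ∀ t ∈ Finset.range (N + 1), L2C μ N p q u t = lam * ((r t : ℂ) * u t)) :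
    lam.im = 0 := by
  set R := ∑ t ∈ range (N + 1), r t * Complex.normSq (u t)
  have hR : 0 < R := by
    obtain ⟨t₀, ht₀, hut₀⟩ := hu0
    exact sum_pos' (fun t _ => mul_nonneg (hr t).le (Complex.normSq_nonneg _))
      ⟨t₀, ht₀, mul_pos (hr t₀) (Complex.normSq_pos.mpr hut₀)⟩
  have heigen : ∑ t ∈ range (N + 1), L2C μ N p q u t * conj (u t) = lam * R := by
    push_cast [R, mul_sum]
    refine sum_congr rfl fun t ht => ?_
    rw [hu t ht, ← Complex.mul_conj]
    ring
  have him := congrArg Complex.im ((sum_L2C_mul_conj μ N p q u).symm.trans heigen)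
  rw [Complex.ofReal_im, Complex.im_mul_ofReal] at him
  exact (mul_eq_zero.mp him.symm).resolve_right hR.ne'

/-- All eigenvalues of the G-L DFSL equation are real. -/
theorem L2_eigenvalues_real (μ : ℝ) (hμ0 : 0 < μ) (hμ1 : μ ≤ 1)
    (N : ℕ) (hN : 0 < N) (p q r : ℕ → ℝ) (hp : ∀ t, 0 < p t) (hr : ∀ t, 0 < r t)
    (u : ℕ → ℂ) (hu0 : ∃ t ∈ Finset.range (N + 1), u t ≠ 0) (lam : ℂ)
    (hu : ∀ t ∈ Finset.range (N + 1), L2C μ N p q u t = lam * ((r t : ℂ) * u t)) :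
    lam.im = 0 :=
  L2_eigenvalues_real_general μ N p q r hr u hu0 lam hu
end

section
/- Summation by parts for Grünwald–Letnikov delta fractional differences: for any 0 < μ ≤ 1 and any real-valued functions u, v defined on {0,1,…,N}, one has ∑_{s=0}^{N} u(s)·Δ₋^μ v(s) = ∑_{s=0}^{N} v(s)·Δ₊^μ u(s). -/
/-! With `c = glCoef μ`, both sides are the sum of `u t * c (t - j) * v j` over the triangle
`j ≤ t ≤ N`, summed first over `j` on the left and first over `t` on the right. -/

open Finset

section Convolution

variable {R : Type*} [CommSemiring R] (c u v : ℕ → R)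

theorem sum_range_succ_mul_sub_eq_sum_sub_mul (t : ℕ) :
    ∑ s ∈ range (t + 1), c s * v (t - s) = ∑ j ∈ range (t + 1), c (t - j) * v j := by
  rw [← sum_range_reflect]
  refine sum_congr rfl fun s hs => ?_
  rw [Nat.add_sub_cancel, Nat.sub_sub_self (Nat.lt_succ_iff.mp (mem_range.mp hs))]

theorem sum_range_mul_add_eq_sum_Ico_sub_mul {j N : ℕ} (hj : j ≤ N) :
    ∑ s ∈ range (N - j + 1), c s * u (j + s) = ∑ t ∈ Ico j (N + 1), c (t - j) * u t := by
  rw [sum_Ico_eq_sum_range, Nat.sub_add_comm hj]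
  simp only [Nat.add_sub_cancel_left]

theorem sum_mul_sum_range_sub_eq_sum_mul_sum_range_add (N : ℕ) :
    ∑ t ∈ range (N + 1), u t * ∑ s ∈ range (t + 1), c s * v (t - s) =
      ∑ j ∈ range (N + 1), v j * ∑ s ∈ range (N - j + 1), c s * u (j + s) := by
  calc ∑ t ∈ range (N + 1), u t * ∑ s ∈ range (t + 1), c s * v (t - s)
      = ∑ t ∈ range (N + 1), ∑ j ∈ range (t + 1), u t * c (t - j) * v j := by
        simp only [sum_range_succ_mul_sub_eq_sum_sub_mul, mul_sum, mul_assoc]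
    _ = ∑ j ∈ range (N + 1), ∑ t ∈ Ico j (N + 1), u t * c (t - j) * v j :=
        sum_comm' fun t j => by simp only [mem_range, mem_Ico]; omega
    _ = ∑ j ∈ range (N + 1), v j * ∑ s ∈ range (N - j + 1), c s * u (j + s) := by
        refine sum_congr rfl fun j hj => ?_
        rw [sum_range_mul_add_eq_sum_Ico_sub_mul c u (Nat.lt_succ_iff.mp (mem_range.mp hj)),
          mul_sum]
        exact sum_congr rfl fun t _ => by ring

end Convolution

theorem GL_summation_by_parts_general (μ : ℝ)
    (N : ℕ) (u v : ℕ → ℝ) :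
    ∑ s ∈ Finset.range (N + 1), u s * deltaMinusGL μ v s =
      ∑ s ∈ Finset.range (N + 1), v s * deltaPlusGL μ N u s :=
  sum_mul_sum_range_sub_eq_sum_mul_sum_range_add (glCoef μ) u v N

/-- Summation by parts for G-L delta fractional differences:
`∑_{s=0}^{N} u(s)·Δ₋^μ v(s) = ∑_{s=0}^{N} v(s)·Δ₊^μ u(s)`. -/
theorem GL_summation_by_parts (μ : ℝ) (hμ0 : 0 < μ) (hμ1 : μ ≤ 1)
    (N : ℕ) (hN : 0 < N) (u v : ℕ → ℝ) :
    ∑ s ∈ Finset.range (N + 1), u s * deltaMinusGL μ v s =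
      ∑ s ∈ Finset.range (N + 1), v s * deltaPlusGL μ N u s :=
  GL_summation_by_parts_general μ N u v
end

section
/- Summation by parts for nabla Riemann–Liouville fractional differences: for any 0 < μ < 1, integers a < b, and real-valued functions u, v on the integers, one has ∑_{s=a+1}^{b−1} u(s)·∇_a^μ v(s) = ∑_{s=a+1}^{b−1} v(s)·(_b∇^μ u)(s). -/
open Finset

theorem Finset.sum_Icc_sum_Icc_sub_comm {M : Type*} [AddCommMonoid M] (m n d : ℤ) (hd : 0 ≤ d)
    (f : ℤ → ℤ → M) :
    ∑ t ∈ Icc m n, ∑ s ∈ Icc m (t - d), f t s = ∑ s ∈ Icc m n, ∑ t ∈ Icc (s + d) n, f t s :=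
  sum_comm' fun t s => by simp only [mem_Icc]; omega

theorem Finset.sum_mul_sum_Icc_conv_comm {R : Type*} [CommSemiring R] (m n d : ℤ) (hd : 0 ≤ d)
    (k u v : ℤ → R) :
    ∑ t ∈ Icc m n, u t * ∑ s ∈ Icc m (t - d), k (t - s) * v s =
      ∑ s ∈ Icc m n, v s * ∑ t ∈ Icc (s + d) n, k (t - s) * u t := by
  simp_rw [mul_sum]
  rw [sum_Icc_sum_Icc_sub_comm m n d hd]
  exact sum_congr rfl fun s _ => sum_congr rfl fun t _ => by ring

-- The bounds `t - 0` and `t + 0` match the offset `d = 0` of `Finset.sum_mul_sum_Icc_conv_comm`.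
theorem nablaLeftRL_eq (μ : ℝ) (a : ℤ) (x : ℤ → ℝ) (t : ℤ) :
    nablaLeftRL μ a x t = 1 / Real.Gamma (1 - μ) *
      (∑ s ∈ Icc (a + 1) (t - 0), risingFac ((t - s + 1 : ℤ) : ℝ) (-μ) * x s -
        ∑ s ∈ Icc (a + 1) (t - 1), risingFac ((t - s : ℤ) : ℝ) (-μ) * x s) := by
  rw [nablaLeftRL, sub_zero, mul_sub]
  congr 2 <;> refine sum_congr rfl fun s _ => ?_ <;> congr 3 <;> ring

theorem nablaRightRL_eq (μ : ℝ) (b : ℤ) (x : ℤ → ℝ) (t : ℤ) :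
    nablaRightRL μ b x t = 1 / Real.Gamma (1 - μ) *
      (∑ s ∈ Icc (t + 0) (b - 1), risingFac ((s - t + 1 : ℤ) : ℝ) (-μ) * x s -
        ∑ s ∈ Icc (t + 1) (b - 1), risingFac ((s - t : ℤ) : ℝ) (-μ) * x s) := by
  rw [nablaRightRL, add_zero, neg_sub, mul_sub]
  congr 2 <;> refine sum_congr rfl fun s _ => ?_ <;> congr 3 <;> ring

theorem RL_summation_by_parts_general (μ : ℝ)
    (a b : ℤ) (u v : ℤ → ℝ) :
    ∑ s ∈ Finset.Icc (a + 1) (b - 1), u s * nablaLeftRL μ a v s =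
      ∑ s ∈ Finset.Icc (a + 1) (b - 1), v s * nablaRightRL μ b u s := by
  simp only [nablaLeftRL_eq, nablaRightRL_eq, mul_left_comm (u _), mul_left_comm (v _), mul_sub,
    ← mul_sum, sum_sub_distrib]
  rw [sum_mul_sum_Icc_conv_comm _ _ 0 le_rfl (fun n => risingFac ((n + 1 : ℤ) : ℝ) (-μ)),
    sum_mul_sum_Icc_conv_comm _ _ 1 zero_le_one (fun n => risingFac (n : ℝ) (-μ))]

/-- Summation by parts for nabla Riemann–Liouville fractional differences:
`∑_{s=a+1}^{b−1} u(s)·∇_a^μ v(s) = ∑_{s=a+1}^{b−1} v(s)·(_b∇^μ u)(s)`. -/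
theorem RL_summation_by_parts (μ : ℝ) (hμ0 : 0 < μ) (hμ1 : μ < 1)
    (a b : ℤ) (hab : a < b) (u v : ℤ → ℝ) :
    ∑ s ∈ Finset.Icc (a + 1) (b - 1), u s * nablaLeftRL μ a v s =
      ∑ s ∈ Finset.Icc (a + 1) (b - 1), v s * nablaRightRL μ b u s :=
  RL_summation_by_parts_general μ a b u v
end
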